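/- Feasible step sizes for predictor–corrector path tracking: fix t* > t_k, let x : [t_k, t*] → E be a solution path with H(x(t), t) = 0 for all t ∈ [t_k, t*], and let x̂ : [t_k, t*] → E be a prediction path of order p ≥ 1, i.e., ‖x(t) − x̂(t)‖ ≤ η_p·(t − t_k)^p for all t ∈ [t_k, t*], with η_p ≥ 0. Let D ⊆ E be an open convex set containing x(t) and x̂(t) for all t ∈ [t_k, t*], on which, for every t ∈ [t_k, t*], H_x(u, t) is injective for all u ∈ D and the Lipschitz condition ‖H_x(v, t)† ∘ (H_x(u + s(v − u), t) − H_x(u, t))‖ ≤ ω·s·‖v − u‖ holds for all u, v ∈ D and s ∈ [0, 1], where ω > 0. Let τ > 0, let N ≥ 1 be an integer, set δ := ((ω/2)·τ / (1 + (ω/2)·τ))^(1/(2N)), and assume the closed ball of radius 2/ω around x(t_k + Δt_k) is contained in D. Then for every step size Δt_k with 0 ≤ Δt_k ≤ min{ ((√(4δ + 1) − 1)/(ω·η_p))^(1/p), t* − t_k }, the Newton iterates x^{j+1} = x^j − H_x(x^j, t_{k+1})† H(x^j, t_{k+1}) for the system u ↦ H(u, t_{k+1}) at t_{k+1} := t_k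 + Δt_k, started at x^0 = x̂(t_{k+1}), achieve accuracy τ towards the solution point after N steps: ‖x^N − x(t_{k+1})‖ ≤ τ. -/

import Mathlib

/-!
One Newton step `y ↦ y - H_x(y)† H(y)` towards a zero `x*` of `H` has error at most
`(ω/2) ‖y - x*‖²`: since `H_x(y)†` is a left inverse of `H_x(y)`, the error is
`H_x(y)† (H_x(y) (y - x*) - (H(y) - H(x*)))`, and the Lipschitz condition bounds the derivative
of this along the segment `[x*, y]`. Hence `e_j := (ω/2) ‖x^j - x*‖` satisfies
`e_{j+1} ≤ e_j²`, and the iterates stay in the ball of radius `2/ω` around `x*` as long as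
`e_0 ≤ δ ≤ 1`. The step-size bound gives `ω ‖x̂ - x*‖ ≤ √(4δ + 1) - 1 ≤ 2δ`, i.e. `e_0 ≤ δ`, so
`e_N ≤ δ^(2^N) ≤ δ^(2N) = (ωτ/2) / (1 + ωτ/2) ≤ ωτ/2`.
-/

noncomputable def pinv {n m : ℕ}
    (A : EuclideanSpace ℂ (Fin n) →L[ℂ] EuclideanSpace ℂ (Fin m)) :
    EuclideanSpace ℂ (Fin m) →L[ℂ] EuclideanSpace ℂ (Fin n) :=
  (ContinuousLinearMap.inverse ((ContinuousLinearMap.adjoint A) ∘L A)) ∘L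
    ContinuousLinearMap.adjoint A

/-- Newton iteration for the system `u ↦ H(u, t)` at a fixed parameter value `t`. -/
noncomputable def newtonH {n m : ℕ}
    (H : EuclideanSpace ℂ (Fin n) × ℝ → EuclideanSpace ℂ (Fin m)) (t : ℝ)
    (y0 : EuclideanSpace ℂ (Fin n)) : ℕ → EuclideanSpace ℂ (Fin n)
  | 0 => y0
  | (j+1) => newtonH H t y0 j -
      pinv (fderiv ℂ (fun v => H (v, t)) (newtonH H t y0 j)) (H (newtonH H t y0 j, t))

open ContinuousLinearMap

theorem pinv_comp_self {n m : ℕ}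
    {A : EuclideanSpace ℂ (Fin n) →L[ℂ] EuclideanSpace ℂ (Fin m)}
    (hA : Function.Injective A) : pinv A ∘L A = .id ℂ _ := by
  have hG : Function.Injective (adjoint A ∘L A) := (adjoint_comp_self_injective_iff A).2 hA
  have hinv : (adjoint A ∘L A).IsInvertible :=
    ⟨(LinearEquiv.ofInjectiveEndo _ hG).toContinuousLinearEquiv, rfl⟩
  rw [pinv, comp_assoc, hinv.inverse_comp_self]

theorem norm_newton_step_sub_le {𝕜 E F : Type*} [NontriviallyNormedField 𝕜]
    [NormedAlgebra ℝ 𝕜] [NormedAddCommGroup E] [NormedSpace 𝕜 E] [NormedSpace ℝ E]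
    [IsScalarTower ℝ 𝕜 E] [NormedAddCommGroup F] [NormedSpace 𝕜 F] [NormedSpace ℝ F]
    [IsScalarTower ℝ 𝕜 F] {f : E → F} {f' : E → E →L[𝕜] F} {L : F →L[𝕜] E}
    {xs y : E} {ω : ℝ} (hf : ∀ u ∈ segment ℝ xs y, HasFDerivAt f (f' u) u)
    (hxs : f xs = 0) (hL : L ∘L f' y = .id 𝕜 E)
    (hLip : ∀ u ∈ segment ℝ xs y, ‖L ∘L (f' y - f' u)‖ ≤ ω * ‖y - u‖) :
    ‖y - L (f y) - xs‖ ≤ ω / 2 * ‖y - xs‖ ^ 2 := by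
  set d := y - xs
  have hz : ∀ s ∈ Set.Icc (0 : ℝ) 1, xs + s • d ∈ segment ℝ xs y := fun s hs =>
    segment_eq_image' ℝ xs y ▸ Set.mem_image_of_mem _ hs
  -- `‖φ 1‖` is the Newton error; fencing `‖φ‖` by `ω ‖d‖² (s - s² / 2)` gives the factor `1 / 2`.
  set φ : ℝ → E := fun s => L (f (xs + s • d)) - s • d
  have hφ' : ∀ s ∈ Set.Icc (0 : ℝ) 1,
      HasDerivAt φ (-(L ∘L (f' y - f' (xs + s • d))) d) s := by
    intro s hs
    have hline : HasDerivAt (fun s : ℝ => xs + s • d) d s := by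
      simpa using ((hasDerivAt_id s).smul_const d).const_add xs
    have := (L.restrictScalars ℝ).hasFDerivAt.comp_hasDerivAt s
      (((hf _ (hz s hs)).restrictScalars ℝ).comp_hasDerivAt s hline)
    have hLd : L (f' y d) = d := by simpa using congrArg (fun T => T d) hL
    refine (this.sub ((hasDerivAt_id s).smul_const d)).congr_deriv ?_
    simp [hLd]
  have hbound : ∀ s ∈ Set.Ico (0 : ℝ) 1,
      ‖-(L ∘L (f' y - f' (xs + s • d))) d‖ ≤ ω * ‖d‖ ^ 2 * (1 - s) := by
    intro s hs
    have hyz : ‖y - (xs + s • d)‖ = (1 - s) * ‖d‖ := by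
      rw [show y - (xs + s • d) = (1 - s) • d by simp only [d, sub_smul, one_smul]; abel,
        norm_smul, Real.norm_of_nonneg (by linarith [hs.2])]
    calc ‖-(L ∘L (f' y - f' (xs + s • d))) d‖
        ≤ ‖L ∘L (f' y - f' (xs + s • d))‖ * ‖d‖ := by rw [norm_neg]; exact le_opNorm _ _
      _ ≤ ω * ‖y - (xs + s • d)‖ * ‖d‖ := by
          gcongr; exact hLip _ (hz s (Set.Ico_subset_Icc_self hs))
      _ = ω * ‖d‖ ^ 2 * (1 - s) := by rw [hyz]; ring
  have hB : ∀ s : ℝ, HasDerivAt (fun s => ω * ‖d‖ ^ 2 * (s - s ^ 2 / 2))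
      (ω * ‖d‖ ^ 2 * (1 - s)) s := fun s =>
    (((hasDerivAt_id s).sub ((hasDerivAt_pow 2 s).div_const 2)).const_mul _).congr_deriv
      (by simp)
  have hφ1 := image_norm_le_of_norm_deriv_right_le_deriv_boundary
    (fun s hs => (hφ' s hs).continuousAt.continuousWithinAt)
    (fun s hs => (hφ' s (Set.Ico_subset_Icc_self hs)).hasDerivWithinAt)
    (by simp [φ, hxs]) hB hbound (Set.right_mem_Icc.2 zero_le_one)
  calc ‖y - L (f y) - xs‖ = ‖φ 1‖ := by
        rw [← norm_neg]; simp only [φ, d, one_smul, add_sub_cancel]; congr 1; abel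
    _ ≤ ω / 2 * ‖y - xs‖ ^ 2 := by linarith

theorem mem_and_mul_norm_sub_le_pow_two_pow {E : Type*} [SeminormedAddCommGroup E]
    {x : ℕ → E} {xs : E} {D : Set E} {κ δ : ℝ} (hκ : 0 < κ) (hδ : δ ≤ 1)
    (hball : Metric.closedBall xs κ⁻¹ ⊆ D) (h0D : x 0 ∈ D) (h0 : κ * ‖x 0 - xs‖ ≤ δ)
    (hstep : ∀ j, x j ∈ D → ‖x (j + 1) - xs‖ ≤ κ * ‖x j - xs‖ ^ 2) :
    ∀ j, x j ∈ D ∧ κ * ‖x j - xs‖ ≤ δ ^ 2 ^ j := by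
  have hδ0 : 0 ≤ δ := (by positivity : 0 ≤ κ * ‖x 0 - xs‖).trans h0
  intro j
  induction j with
  | zero => simpa using ⟨h0D, h0⟩
  | succ j ih =>
    obtain ⟨hjD, hj⟩ := ih
    have hnext : κ * ‖x (j + 1) - xs‖ ≤ δ ^ 2 ^ (j + 1) := calc
      κ * ‖x (j + 1) - xs‖ ≤ κ * (κ * ‖x j - xs‖ ^ 2) := by gcongr; exact hstep j hjD
      _ = (κ * ‖x j - xs‖) ^ 2 := by ring
      _ ≤ (δ ^ 2 ^ j) ^ 2 := by gcongr
      _ = δ ^ 2 ^ (j + 1) := by rw [← pow_mul, pow_succ]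
    refine ⟨hball ?_, hnext⟩
    rw [Metric.mem_closedBall, dist_eq_norm, ← mul_one κ⁻¹, le_inv_mul_iff₀ hκ]
    exact hnext.trans (pow_le_one₀ hδ0 hδ)

theorem mul_le_of_le_mul_pow_of_le_div_rpow {e η ω Δ X : ℝ} {p : ℕ} (hp : p ≠ 0)
    (hω : 0 < ω) (hΔ : 0 ≤ Δ) (hX : 0 ≤ X) (he : e ≤ η * Δ ^ p)
    (hΔX : Δ ≤ (X / (ω * η)) ^ ((1 : ℝ) / p)) : ω * e ≤ X := by
  rcases le_or_gt η 0 with hη | hη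
  · calc ω * e ≤ ω * (η * Δ ^ p) := by gcongr
      _ ≤ 0 := mul_nonpos_of_nonneg_of_nonpos hω.le
          (mul_nonpos_of_nonpos_of_nonneg hη (by positivity))
      _ ≤ X := hX
  · have hpow : Δ ^ p ≤ X / (ω * η) := by
      rwa [one_div, Real.le_rpow_inv_iff_of_pos hΔ (by positivity) (by positivity),
        Real.rpow_natCast] at hΔX
    calc ω * e ≤ ω * (η * Δ ^ p) := by gcongr
      _ = Δ ^ p * (ω * η) := by ring
      _ ≤ X := (le_div_iff₀ (by positivity)).1 hpow

theorem sqrt_four_mul_add_one_sub_one_le {δ : ℝ} (hδ : 0 ≤ δ) : √(4 * δ + 1) - 1 ≤ 2 * δ := by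
  rw [sub_le_iff_le_add, Real.sqrt_le_left (by positivity)]
  nlinarith

theorem rpow_one_div_two_mul_pow_two_pow_le {b : ℝ} {N : ℕ} (hb0 : 0 ≤ b) (hb1 : b ≤ 1)
    (hN : 1 ≤ N) : (b ^ ((1 : ℝ) / (2 * N))) ^ 2 ^ N ≤ b := by
  have h2N : 2 * N ≤ 2 ^ N := by
    obtain ⟨k, rfl⟩ := Nat.exists_eq_add_of_le' hN
    have := k.lt_two_pow_self
    rw [pow_succ]
    omega
  calc (b ^ ((1 : ℝ) / (2 * N))) ^ 2 ^ N ≤ (b ^ ((1 : ℝ) / (2 * N))) ^ (2 * N) :=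
        pow_le_pow_of_le_one (by positivity) (Real.rpow_le_one hb0 hb1 (by positivity)) h2N
    _ = b := by
        simpa using Real.rpow_inv_natCast_pow hb0 (by omega : 2 * N ≠ 0)

theorem feasible_step_sizes_general {n m : ℕ}
    (H : EuclideanSpace ℂ (Fin n) × ℝ → EuclideanSpace ℂ (Fin m))
    (hHdiff : ∀ (u : EuclideanSpace ℂ (Fin n)) (t : ℝ),
      DifferentiableAt ℂ (fun v => H (v, t)) u)
    (tk tstar : ℝ)
    (x xhat : ℝ → EuclideanSpace ℂ (Fin n))
    (hsol : ∀ t ∈ Set.Icc tk tstar, H (x t, t) = 0)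
    (ηp : ℝ) (p : ℕ) (hp : 1 ≤ p)
    (hpred : ∀ t ∈ Set.Icc tk tstar, ‖x t - xhat t‖ ≤ ηp * (t - tk) ^ p)
    (D : Set (EuclideanSpace ℂ (Fin n))) (hDconv : Convex ℝ D)
    (hmem : ∀ t ∈ Set.Icc tk tstar, x t ∈ D ∧ xhat t ∈ D)
    (ω : ℝ) (hω : 0 < ω)
    (hinj : ∀ t ∈ Set.Icc tk tstar, ∀ u ∈ D,
      Function.Injective (fderiv ℂ (fun v => H (v, t)) u))
    (hLip : ∀ t ∈ Set.Icc tk tstar, ∀ u ∈ D, ∀ v ∈ D, ∀ s ∈ Set.Icc (0:ℝ) 1,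
      ‖(pinv (fderiv ℂ (fun w => H (w, t)) v)) ∘L
          (fderiv ℂ (fun w => H (w, t)) (u + s • (v - u)) -
            fderiv ℂ (fun w => H (w, t)) u)‖ ≤ ω * s * ‖v - u‖)
    (τ : ℝ) (hτ : 0 < τ) (N : ℕ) (hN : 1 ≤ N)
    (δ : ℝ) (hδ : δ = (ω / 2 * τ / (1 + ω / 2 * τ)) ^ ((1 : ℝ) / (2 * (N : ℝ))))
    (Δtk : ℝ) (hΔtk0 : 0 ≤ Δtk)
    (hball : Metric.closedBall (x (tk + Δtk)) (2 / ω) ⊆ D)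
    (hΔtk : Δtk ≤ min (((Real.sqrt (4 * δ + 1) - 1) / (ω * ηp)) ^ ((1 : ℝ) / (p : ℝ)))
        (tstar - tk)) :
    ‖newtonH H (tk + Δtk) (xhat (tk + Δtk)) N - x (tk + Δtk)‖ ≤ τ := by
  set t₁ := tk + Δtk
  have ht₁ : t₁ ∈ Set.Icc tk tstar :=
    ⟨by linarith, by linarith [hΔtk.trans (min_le_right _ _)]⟩
  set c := ω / 2 * τ
  have hc : 0 ≤ c := by positivity
  have hc1 : c / (1 + c) ≤ 1 := by rw [div_le_one (by positivity)]; linarith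
  have hδ0 : 0 ≤ δ := hδ ▸ by positivity
  have hδ1 : δ ≤ 1 := hδ ▸ Real.rpow_le_one (by positivity) hc1 (by positivity)
  have hinit : ω / 2 * ‖xhat t₁ - x t₁‖ ≤ δ := by
    have h := mul_le_of_le_mul_pow_of_le_div_rpow (e := ‖xhat t₁ - x t₁‖) (by omega) hω hΔtk0
      (sub_nonneg.2 (Real.one_le_sqrt.2 (by linarith)))
      (by rw [norm_sub_rev]; simpa [t₁] using hpred t₁ ht₁) (hΔtk.trans (min_le_left _ _))
    linarith [sqrt_four_mul_add_one_sub_one_le hδ0]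
  have hstep (j : ℕ) (hj : newtonH H t₁ (xhat t₁) j ∈ D) :
      ‖newtonH H t₁ (xhat t₁) (j + 1) - x t₁‖ ≤
        ω / 2 * ‖newtonH H t₁ (xhat t₁) j - x t₁‖ ^ 2 :=
    norm_newton_step_sub_le (𝕜 := ℂ) (f := fun v => H (v, t₁))
      (fun u _ => (hHdiff u t₁).hasFDerivAt) (hsol t₁ ht₁) (pinv_comp_self (hinj t₁ ht₁ _ hj))
      fun u hu => by
        simpa using hLip t₁ ht₁ u (hDconv.segment_subset (hmem t₁ ht₁).1 hj hu) _ hj 1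
          (Set.right_mem_Icc.2 zero_le_one)
  have hconv := (mem_and_mul_norm_sub_le_pow_two_pow (by positivity) hδ1
    (by rwa [inv_div]) (hmem t₁ ht₁).2 hinit hstep N).2
  have hδN : δ ^ 2 ^ N ≤ c := by
    rw [hδ]
    exact (rpow_one_div_two_mul_pow_two_pow_le (by positivity) hc1 hN).trans
      (div_le_self (by positivity) (by linarith))
  exact le_of_mul_le_mul_left (hconv.trans hδN) (by positivity)

/-- Feasible step sizes for predictor–corrector path tracking: for every step size
`Δt_k` below the maximal feasible step size, Newton's method for `u ↦ H(u, t_k + Δt_k)`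
started at the predicted point `x̂(t_k + Δt_k)` achieves accuracy `τ` towards the
solution point `x(t_k + Δt_k)` after `N` steps. -/
theorem feasible_step_sizes {n m : ℕ} (hn : 0 < n) (hnm : n ≤ m)
    (H : EuclideanSpace ℂ (Fin n) × ℝ → EuclideanSpace ℂ (Fin m))
    (hH : ContDiff ℝ 1 H)
    (hHdiff : ∀ (u : EuclideanSpace ℂ (Fin n)) (t : ℝ),
      DifferentiableAt ℂ (fun v => H (v, t)) u)
    (tk tstar : ℝ) (htk : tk < tstar)
    (x xhat : ℝ → EuclideanSpace ℂ (Fin n))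
    (hsol : ∀ t ∈ Set.Icc tk tstar, H (x t, t) = 0)
    (ηp : ℝ) (hηp : 0 ≤ ηp) (p : ℕ) (hp : 1 ≤ p)
    (hpred : ∀ t ∈ Set.Icc tk tstar, ‖x t - xhat t‖ ≤ ηp * (t - tk) ^ p)
    (D : Set (EuclideanSpace ℂ (Fin n))) (hDopen : IsOpen D) (hDconv : Convex ℝ D)
    (hmem : ∀ t ∈ Set.Icc tk tstar, x t ∈ D ∧ xhat t ∈ D)
    (ω : ℝ) (hω : 0 < ω)
    (hinj : ∀ t ∈ Set.Icc tk tstar, ∀ u ∈ D,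
      Function.Injective (fderiv ℂ (fun v => H (v, t)) u))
    (hLip : ∀ t ∈ Set.Icc tk tstar, ∀ u ∈ D, ∀ v ∈ D, ∀ s ∈ Set.Icc (0:ℝ) 1,
      ‖(pinv (fderiv ℂ (fun w => H (w, t)) v)) ∘L
          (fderiv ℂ (fun w => H (w, t)) (u + s • (v - u)) -
            fderiv ℂ (fun w => H (w, t)) u)‖ ≤ ω * s * ‖v - u‖)
    (τ : ℝ) (hτ : 0 < τ) (N : ℕ) (hN : 1 ≤ N)
    (δ : ℝ) (hδ : δ = (ω / 2 * τ / (1 + ω / 2 * τ)) ^ ((1 : ℝ) / (2 * (N : ℝ))))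
    (Δtk : ℝ) (hΔtk0 : 0 ≤ Δtk)
    (hball : Metric.closedBall (x (tk + Δtk)) (2 / ω) ⊆ D)
    (hΔtk : Δtk ≤ min (((Real.sqrt (4 * δ + 1) - 1) / (ω * ηp)) ^ ((1 : ℝ) / (p : ℝ)))
        (tstar - tk)) :
    ‖newtonH H (tk + Δtk) (xhat (tk + Δtk)) N - x (tk + Δtk)‖ ≤ τ :=
  feasible_step_sizes_general H hHdiff tk tstar x xhat hsol ηp p hp hpred D hDconv hmem ω hω hinj
    hLip τ hτ N hN δ hδ Δtk hΔtk0 hball hΔtk
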